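/- Let F_81 be the field with 81 elements and F_3 its prime subfield. Let N = {(λ, λ^{-1}·I_2) : λ ∈ F_3^×}, a subgroup of the direct product F_81^× × GL_2(F_3). Then the quotient group (F_81^× × GL_2(F_3))/N is not isomorphic to the direct product (F_81^×/F_3^×) × GL_2(F_3). -/

import Mathlib

/-!
The image of `F_81^×` in the quotient is still cyclic of order 80, because `N` meets
`F_81^× × 1` trivially, so the exponent of the quotient is divisible by 80. In the product,
`F_81^×/F_3^×` has order 40 and `GL_2(F_3)` has exponent 24, so its exponent divides
`lcm 40 24 = 120`, which 80 does not divide.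
-/

open Matrix
open scoped MatrixGroups

/-- The homomorphism `F_3^× → K^× × GL_2(F_3)`, `λ ↦ (λ, λ⁻¹ • I_2)`, where `K` is the
field with 81 elements and `F_3 = ZMod 3` its prime field. -/
def psi81 (K : Type*) [Field K] [CharP K 3] :
    (ZMod 3)ˣ →* Kˣ × GL (Fin 2) (ZMod 3) :=
  (Units.map (ZMod.castHom (dvd_refl 3) K).toMonoidHom).prod
    ((Units.map (algebraMap (ZMod 3) (Matrix (Fin 2) (Fin 2) (ZMod 3))).toMonoidHom).comp
      invMonoidHom)

/-- The subgroup `N = {(λ, λ⁻¹ I_2) : λ ∈ F_3^×} ≤ F_81^× × GL_2(F_3)`. -/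
def N81 (K : Type*) [Field K] [CharP K 3] : Subgroup (Kˣ × GL (Fin 2) (ZMod 3)) :=
  (psi81 K).range

instance N81_normal (K : Type*) [Field K] [CharP K 3] : (N81 K).Normal := by
  constructor
  intro n hn g
  obtain ⟨lam, rfl⟩ := hn
  have hcomm : psi81 K lam * g = g * psi81 K lam := by
    apply Prod.ext
    · exact mul_comm _ _
    · apply Units.ext
      show ((psi81 K lam).2 : Matrix (Fin 2) (Fin 2) (ZMod 3)) * (g.2 : Matrix (Fin 2) (Fin 2) (ZMod 3))
        = (g.2 : Matrix (Fin 2) (Fin 2) (ZMod 3)) * ((psi81 K lam).2 : Matrix (Fin 2) (Fin 2) (ZMod 3))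
      have : ((psi81 K lam).2 : Matrix (Fin 2) (Fin 2) (ZMod 3))
          = algebraMap (ZMod 3) (Matrix (Fin 2) (Fin 2) (ZMod 3)) ((lam⁻¹ : (ZMod 3)ˣ) : ZMod 3) := rfl
      rw [this]
      exact Algebra.commutes _ _
  have : g * psi81 K lam * g⁻¹ = psi81 K lam := by
    rw [← hcomm]; group
  rw [this]
  exact ⟨lam, rfl⟩

/-- The image of `F_3^×` in `F_81^×`. -/
def F3units (K : Type*) [Field K] [CharP K 3] : Subgroup Kˣ :=
  (Units.map (ZMod.castHom (dvd_refl 3) K).toMonoidHom).range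

section

variable (K : Type*) [Field K] [CharP K 3]

theorem inl_mem_N81_iff (g : Kˣ) : ((g, 1) : Kˣ × GL (Fin 2) (ZMod 3)) ∈ N81 K ↔ g = 1 := by
  refine ⟨?_, fun hg => hg ▸ (N81 K).one_mem⟩
  rintro ⟨lam, hlam⟩
  have hlam_inv : lam⁻¹ = 1 :=
    Units.map_injective (algebraMap (ZMod 3) (Matrix (Fin 2) (Fin 2) (ZMod 3))).injective
      (by rw [map_one]; exact congrArg Prod.snd hlam)
  simpa [psi81, inv_eq_one.1 hlam_inv] using (congrArg Prod.fst hlam).symm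

theorem injective_mk_comp_inl_N81 :
    Function.Injective
      ((QuotientGroup.mk' (N81 K)).comp (MonoidHom.inl Kˣ (GL (Fin 2) (ZMod 3)))) := by
  refine (injective_iff_map_eq_one _).2 fun g hg => ?_
  rw [MonoidHom.comp_apply, QuotientGroup.mk'_apply, QuotientGroup.eq_one_iff] at hg
  exact (inl_mem_N81_iff K g).1 hg

theorem nat_card_F3units : Nat.card (F3units K) = 2 := by
  rw [F3units, ← Nat.card_congr (MonoidHom.ofInjective
    (Units.map_injective (ZMod.castHom (dvd_refl 3) K).injective)).toEquiv,
    Nat.card_eq_fintype_card, ZMod.card_units]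

theorem nat_card_units_quotient_F3units :
    Nat.card (Kˣ ⧸ F3units K) * 2 = Nat.card K - 1 := by
  rw [← nat_card_F3units K, ← Subgroup.card_eq_card_quotient_mul_card_subgroup, Nat.card_units]

end

theorem exponent_units_eq_card_sub_one (K : Type*) [Field K] [Finite K] :
    Monoid.exponent Kˣ = Nat.card K - 1 := by
  rw [IsCyclic.exponent_eq_card, Nat.card_units]

set_option maxHeartbeats 2000000 in
set_option maxRecDepth 10000 in
theorem exponent_GL_two_ZMod_three_dvd : Monoid.exponent (GL (Fin 2) (ZMod 3)) ∣ 24 :=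
  Monoid.exponent_dvd_of_forall_pow_eq_one (by decide)

/-- **Berger's claimed isomorphism fails (Example 3.3).**  For `K = F_81`, the quotient
`(F_81^× × GL_2(F_3))/N`, with `N = {(λ, λ⁻¹ I_2) : λ ∈ F_3^×}`, is not isomorphic to the
direct product `(F_81^×/F_3^×) × GL_2(F_3)`. -/
theorem quotient_not_iso_product
    (K : Type*) [Field K] [Fintype K] [CharP K 3] (hK : Fintype.card K = 81) :
    IsEmpty (((Kˣ × GL (Fin 2) (ZMod 3)) ⧸ N81 K) ≃*
      ((Kˣ ⧸ F3units K) × GL (Fin 2) (ZMod 3))) := by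
  refine ⟨fun e => ?_⟩
  rw [← Nat.card_eq_fintype_card] at hK
  have h80 : 80 ∣ Monoid.exponent ((Kˣ × GL (Fin 2) (ZMod 3)) ⧸ N81 K) := by
    rw [show 80 = Monoid.exponent Kˣ by rw [exponent_units_eq_card_sub_one, hK]]
    exact Monoid.exponent_dvd_of_monoidHom _ (injective_mk_comp_inl_N81 K)
  have h40 : Nat.card (Kˣ ⧸ F3units K) = 40 := by
    have := nat_card_units_quotient_F3units K
    omega
  have h120 : Monoid.exponent ((Kˣ ⧸ F3units K) × GL (Fin 2) (ZMod 3)) ∣ 120 := by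
    rw [Monoid.exponent_prod]
    exact Nat.lcm_dvd ((h40 ▸ Group.exponent_dvd_nat_card).trans (by norm_num))
      (exponent_GL_two_ZMod_three_dvd.trans (by norm_num))
  have := h80.trans (Monoid.exponent_eq_of_mulEquiv e ▸ h120)
  norm_num at this
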